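/- arXiv:2412.12921 — 5 statements merged into one kernel-verified Lean document; each statement's English description precedes it below -/
import Mathlib

section
/- Let p : E → B be a surjective G-map between G-spaces, with induced map p̄ : E/G → B/G between orbit spaces. If U ⊆ B is a G-invariant open set admitting a G-equivariant continuous section s : U → E of p (i.e., p ∘ s = id_U), then the open set Ū = π_B(U) ⊆ B/G admits a continuous section s̄ : Ū → E/G of p̄. Consequently, the minimal number of open sets in a cover of B/G by sets admitting local sections of p̄ is at most the minimal number of G-invariant open sets in a cover of B by sets admitting G-equivariant local sections of p. -/
open MulAction

/-- Let `p : E → B` be a surjective `G`-map with induced map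
`p̄ : E/G → B/G`.  If a `G`-invariant open `U ⊆ B` admits a `G`-equivariant continuous
section `s` of `p`, then the open set `Ū = π_B(U)` admits a continuous section of `p̄`.
Consequently, any cover of `B` by `n` `G`-invariant open sets with `G`-equivariant local
sections of `p` yields a cover of `B/G` by `n` open sets with local sections of `p̄`;
hence `secat(p̄) ≤ secat_G(p)` (with strict sections). -/
theorem section_of_orbit_fibration (G : Type) [Group G] [TopologicalSpace G]
    {E B : Type} [TopologicalSpace E] [TopologicalSpace B]
    [MulAction G E] [ContinuousSMul G E] [MulAction G B] [ContinuousSMul G B]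
    (p : E → B) (hpc : Continuous p) (hps : Function.Surjective p)
    (hequiv : ∀ (g : G) (e : E), p (g • e) = g • p e) :
    let πE : E → Quotient (orbitRel G E) := Quotient.mk _
    let πB : B → Quotient (orbitRel G B) := Quotient.mk _
    ∃ pbar : Quotient (orbitRel G E) → Quotient (orbitRel G B),
      Continuous pbar ∧ (∀ e : E, pbar (πE e) = πB (p e)) ∧
      -- single invariant open set with equivariant section descends
      (∀ U : Set B, IsOpen U → (∀ (g : G) (b : B), b ∈ U → g • b ∈ U) →
        ∀ s : U → E, Continuous s → (∀ u : U, p (s u) = u.1) →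
        (∀ (g : G) (u : U) (hu : g • u.1 ∈ U), s ⟨g • u.1, hu⟩ = g • s u) →
        IsOpen (πB '' U) ∧
        ∃ sbar : (πB '' U) → Quotient (orbitRel G E),
          Continuous sbar ∧ ∀ x : (πB '' U), pbar (sbar x) = x.1) ∧
      -- consequence for covers:  secat(p̄) ≤ secat_G(p)
      (∀ (n : ℕ) (U : Fin n → Set B),
        (⋃ i, U i) = Set.univ →
        (∀ i, IsOpen (U i)) →
        (∀ i (g : G) (b : B), b ∈ U i → g • b ∈ U i) →
        (∀ i, ∃ s : U i → E, Continuous s ∧ (∀ u : U i, p (s u) = u.1) ∧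
          (∀ (g : G) (u : U i) (hu : g • u.1 ∈ U i), s ⟨g • u.1, hu⟩ = g • s u)) →
        ∃ V : Fin n → Set (Quotient (orbitRel G B)),
          (⋃ i, V i) = Set.univ ∧ (∀ i, IsOpen (V i)) ∧
          ∀ i, ∃ t : V i → Quotient (orbitRel G E),
            Continuous t ∧ ∀ x : V i, pbar (t x) = x.1) := by
  intro πE πB
  -- the induced map
  have hwd : ∀ a b : E, (orbitRel G E).r a b → πB (p a) = πB (p b) := by
    intro a b hab
    obtain ⟨g, hg⟩ := hab
    refine Quotient.sound ⟨g, ?_⟩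
    simp only [← hg, hequiv]
  set pbar : Quotient (orbitRel G E) → Quotient (orbitRel G B) :=
    Quotient.lift (fun e => πB (p e)) hwd with hpbar
  have main : ∀ U : Set B, IsOpen U → (∀ (g : G) (b : B), b ∈ U → g • b ∈ U) →
      ∀ s : U → E, Continuous s → (∀ u : U, p (s u) = u.1) →
      (∀ (g : G) (u : U) (hu : g • u.1 ∈ U), s ⟨g • u.1, hu⟩ = g • s u) →
      IsOpen (πB '' U) ∧
      ∃ sbar : (πB '' U) → Quotient (orbitRel G E),
        Continuous sbar ∧ ∀ x : (πB '' U), pbar (sbar x) = x.1 := by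
    intro U hUo hUinv s hsc hsec hseq
    have hπBopen : IsOpenMap πB := isOpenMap_quotient_mk'_mul (Γ := G) (T := B)
    have hVopen : IsOpen (πB '' U) := hπBopen U hUo
    refine ⟨hVopen, ?_⟩
    -- well-definedness of the descended section
    have key : ∀ (b b' : B) (hb : b ∈ U) (hb' : b' ∈ U), πB b = πB b' →
        πE (s ⟨b, hb⟩) = πE (s ⟨b', hb'⟩) := by
      intro b b' hb hb' hbb'
      obtain ⟨g, hg⟩ := Quotient.exact hbb'
      have hb2 : g • b' ∈ U := hUinv g b' hb'
      have : s ⟨b, hb⟩ = s ⟨g • b', hb2⟩ := by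
        congr 1
        exact Subtype.ext hg.symm
      rw [this, hseq g ⟨b', hb'⟩ hb2]
      exact Quotient.sound ⟨g, rfl⟩
    -- define sbar via choice
    set sbar : (πB '' U) → Quotient (orbitRel G E) :=
      fun x => πE (s ⟨x.2.choose, x.2.choose_spec.1⟩) with hsbar
    have hsbar_eq : ∀ (x : πB '' U) (b : B) (hb : b ∈ U), πB b = x.1 →
        sbar x = πE (s ⟨b, hb⟩) := by
      intro x b hb hbx
      exact key _ _ x.2.choose_spec.1 hb (x.2.choose_spec.2.trans hbx.symm)
    -- the restricted orbit map is an open quotient map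
    set q : U → (πB '' U) := fun u => ⟨πB u.1, ⟨u.1, u.2, rfl⟩⟩ with hq
    have hqoqm : IsOpenQuotientMap q := by
      refine ⟨?_, ?_, ?_⟩
      · rintro ⟨x, b, hb, rfl⟩
        exact ⟨⟨b, hb⟩, rfl⟩
      · exact Continuous.subtype_mk (continuous_quot_mk.comp continuous_subtype_val) _
      · intro W hW
        have h1 : Subtype.val '' (q '' W) = πB '' (Subtype.val '' W) := by
          rw [← Set.image_comp, ← Set.image_comp]
          rfl
        have h2 : IsOpen (Subtype.val '' (q '' W)) := by
          rw [h1]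
          exact hπBopen _ (hUo.isOpenMap_subtype_val W hW)
        have h3 : q '' W = Subtype.val ⁻¹' (Subtype.val '' (q '' W)) :=
          (Set.preimage_image_eq _ Subtype.val_injective).symm
        rw [h3]
        exact h2.preimage continuous_subtype_val
    refine ⟨sbar, ?_, ?_⟩
    · rw [hqoqm.isQuotientMap.continuous_iff]
      have : sbar ∘ q = fun u : U => πE (s u) := by
        funext u
        exact hsbar_eq (q u) u.1 u.2 rfl
      rw [this]
      exact continuous_quot_mk.comp hsc
    · intro x
      have := hsbar_eq x x.2.choose x.2.choose_spec.1 x.2.choose_spec.2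
      rw [this]
      show πB (p (s ⟨x.2.choose, x.2.choose_spec.1⟩)) = x.1
      rw [hsec ⟨x.2.choose, x.2.choose_spec.1⟩]
      exact x.2.choose_spec.2
  refine ⟨pbar, (Continuous.comp continuous_quot_mk hpc).quotient_lift hwd,
    fun e => rfl, main, ?_⟩
  -- covers
  intro n U hcov hopen hinv hsecs
  refine ⟨fun i => πB '' U i, ?_, ?_, ?_⟩
  · apply Set.eq_univ_of_forall
    intro x
    obtain ⟨b, rfl⟩ := Quotient.exists_rep x
    have : b ∈ ⋃ i, U i := hcov ▸ Set.mem_univ b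
    obtain ⟨i, hi⟩ := Set.mem_iUnion.1 this
    exact Set.mem_iUnion.2 ⟨i, b, hi, rfl⟩
  · intro i
    exact isOpenMap_quotient_mk'_mul (Γ := G) (T := B) _ (hopen i)
  · intro i
    obtain ⟨s, hsc, hsec, hseq⟩ := hsecs i
    exact (main (U i) (hopen i) (hinv i) s hsc hsec hseq).2
end

section
/- Let p : E → B be a G-fibration with parametrized endpoint G-fibration Π : E^I_B → E ×_B E, Π(γ) = (γ(0), γ(1)). For a G-invariant subset U of E ×_B E, the following are equivalent: (1) there exists a G-equivariant section of Π over U; (2) the inclusion U ↪ E ×_B E is G-homotopic to a G-map f : U → E ×_B E taking values in the diagonal Δ(E). -/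
/-!
A section `s` gives the homotopy `(s u t, s u 1)`, which ends on the diagonal. Conversely, let
`F = (F₁, F₂)` deform the inclusion into the diagonal. Then `F₁ u` followed by the reverse of
`F₂ u` is a path from `u.1` to `u.2` whose image in `B` is a path followed by its reverse, hence
null-homotopic rel endpoints. Lifting this null-homotopy and reading the lift along the other three
sides of the square gives a path from `u.1` to `u.2` inside one fibre. All constructions are
natural in `u`, so the equivariant homotopy lifting property makes the result equivariant.
-/

/-- `p` is a `G`-fibration: `G`-equivariant homotopy lifting property for all `G`-spaces. -/
def IsGFibration (G : Type) [Group G] [TopologicalSpace G]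
    {E B : Type} [TopologicalSpace E] [TopologicalSpace B]
    [MulAction G E] [MulAction G B] (p : E → B) : Prop :=
  ∀ (X : Type) (_ : TopologicalSpace X) (_ : MulAction G X) (_ : ContinuousSMul G X)
    (H : X × unitInterval → B) (h : X → E),
      Continuous H → (∀ (g : G) (x : X) (t : unitInterval), H (g • x, t) = g • H (x, t)) →
      Continuous h → (∀ (g : G) (x : X), h (g • x) = g • h x) →
      (∀ x : X, p (h x) = H (x, 0)) →
      ∃ Ht : X × unitInterval → E, Continuous Ht ∧
        (∀ (g : G) (x : X) (t : unitInterval), Ht (g • x, t) = g • Ht (x, t)) ∧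
        (∀ (x : X) (t : unitInterval), p (Ht (x, t)) = H (x, t)) ∧
        (∀ x : X, Ht (x, 0) = h x)

open unitInterval

namespace unitInterval

/-- The tent map `t ↦ 1 - |2t - 1|`. -/
noncomputable def tent : Path (0 : I) 0 :=
  Path.id.trans Path.id.symm

theorem tent_eq_one_of_coe_eq_half {t : I} (ht : (t : ℝ) = 1 / 2) : tent t = 1 := by
  rw [tent, Path.trans_apply, dif_pos ht.le]
  ext
  simp [ht]

/-- Runs up the left side, along the top and down the right side of the unit square. -/
noncomputable def squareBoundary : Path ((0 : I), (0 : I)) ((1 : I), (0 : I)) :=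
  ((Path.refl 0).prod Path.id).trans ((Path.id.prod (Path.refl 1)).trans
    ((Path.refl 1).prod Path.id.symm))

theorem squareBoundary_mem_sides (t : I) :
    (squareBoundary t).1 = 0 ∨ (squareBoundary t).2 = 1 ∨ (squareBoundary t).1 = 1 := by
  suffices ∀ z ∈ Set.range squareBoundary, z.1 = 0 ∨ z.2 = 1 ∨ z.1 = 1 from this _ ⟨t, rfl⟩
  rw [squareBoundary, Path.trans_range, Path.trans_range]
  rintro _ (⟨s, rfl⟩ | ⟨s, rfl⟩ | ⟨s, rfl⟩) <;> simp

end unitInterval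

section GFibration

variable {G : Type} [Group G] [TopologicalSpace G] {E B X : Type}
  [TopologicalSpace E] [TopologicalSpace B] [TopologicalSpace X]
  [MulAction G E] [MulAction G B] [MulAction G X] {p : E → B}

theorem IsGFibration.exists_lift_rel_endpoints [ContinuousSMul G X] (hp : IsGFibration G p)
    (c : X × I → E) (hc : Continuous c) (hcG : ∀ (g : G) x t, c (g • x, t) = g • c (x, t))
    (H : (X × I) × I → B) (hH : Continuous H)
    (hHG : ∀ (g : G) x t s, H ((g • x, t), s) = g • H ((x, t), s))
    (hcH : ∀ y, p (c y) = H (y, 0)) (b : X → B)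
    (hleft : ∀ x s, H ((x, 0), s) = b x) (htop : ∀ x t, H ((x, t), 1) = b x)
    (hright : ∀ x s, H ((x, 1), s) = b x) :
    ∃ γ : X × I → E, Continuous γ ∧ (∀ (g : G) x t, γ (g • x, t) = g • γ (x, t)) ∧
      (∀ x t, p (γ (x, t)) = b x) ∧ ∀ x, γ (x, 0) = c (x, 0) ∧ γ (x, 1) = c (x, 1) := by
  let _ : MulAction G I :=
    { smul := fun _ t => t
      one_smul := fun _ => rfl
      mul_smul := fun _ _ _ => rfl }
  have : ContinuousSMul G I := ⟨continuous_snd⟩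
  obtain ⟨L, hLc, hLG, hLp, hL0⟩ :=
    hp (X × I) inferInstance inferInstance inferInstance H c hH (fun g y => hHG g y.1 y.2) hc
      (fun g y => hcG g y.1 y.2) hcH
  -- The lift along the three other sides of the square is fibrewise with the endpoints of `c`.
  refine ⟨fun y => L ((y.1, (squareBoundary y.2).1), (squareBoundary y.2).2), by fun_prop,
    fun g x t => hLG g (x, _) _, fun x t => ?_, fun x => ?_⟩
  · rw [hLp]
    rcases squareBoundary_mem_sides t with h | h | h
    · rw [h, hleft]
    · rw [h, htop]
    · rw [h, hright]
  · simp only [squareBoundary.source, squareBoundary.target, hL0, and_self]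

theorem IsGFibration.exists_fibrewise_paths_of_homotopy_to_diagonal [ContinuousSMul G X]
    (hp : IsGFibration G p) (hpc : Continuous p) (hpG : ∀ (g : G) e, p (g • e) = g • p e)
    (F : X × I → E × E) (hF : Continuous F) (hFp : ∀ x t, p (F (x, t)).1 = p (F (x, t)).2)
    (hFG : ∀ (g : G) x t, F (g • x, t) = g • F (x, t)) (hF1 : ∀ x, (F (x, 1)).1 = (F (x, 1)).2) :
    ∃ γ : X × I → E, Continuous γ ∧ (∀ (g : G) x t, γ (g • x, t) = g • γ (x, t)) ∧
      (∀ x t, p (γ (x, t)) = p (F (x, 0)).1) ∧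
      ∀ x, γ (x, 0) = (F (x, 0)).1 ∧ γ (x, 1) = (F (x, 0)).2 := by
  -- `c x` runs along the first component of `F x` and back along the second, so its image in `B`
  -- is a path followed by its reverse, which `H` contracts rel endpoints.
  let c : X × I → E := fun y =>
    if (y.2 : ℝ) ≤ 1 / 2 then (F (y.1, tent y.2)).1 else (F (y.1, tent y.2)).2
  let H : (X × I) × I → B := fun z => p (F (z.1.1, tent z.1.2 * σ z.2)).1
  have hc : Continuous c := by
    refine Continuous.if_le (by fun_prop) (by fun_prop) (by fun_prop) continuous_const ?_
    intro y hy
    rw [tent_eq_one_of_coe_eq_half hy, hF1]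
  have hcG : ∀ (g : G) x t, c (g • x, t) = g • c (x, t) := by
    intro g x t
    simp only [c, hFG]
    split_ifs <;> rfl
  have hHG : ∀ (g : G) x t s, H ((g • x, t), s) = g • H ((x, t), s) := by
    intro g x t s
    simp only [H, hFG, Prod.smul_fst, hpG]
  have hcH : ∀ y, p (c y) = H (y, 0) := by
    intro y
    simp only [c, H, symm_zero, mul_one]
    split_ifs
    · rfl
    · exact (hFp _ _).symm
  obtain ⟨γ, hγ, hγG, hγp, hγ01⟩ := hp.exists_lift_rel_endpoints c hc hcG H (by fun_prop) hHG hcH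
    (fun x => p (F (x, 0)).1) (fun x s => by simp [H]) (fun x t => by simp [H])
    (fun x s => by simp [H])
  refine ⟨γ, hγ, hγG, hγp, fun x => ?_⟩
  rw [(hγ01 x).1, (hγ01 x).2]
  norm_num [c]

end GFibration

theorem equivariant_parametrized_section_iff_compressible_general
    (G : Type) [Group G] [TopologicalSpace G]
    {E B : Type} [TopologicalSpace E] [TopologicalSpace B]
    [MulAction G E] [ContinuousSMul G E] [MulAction G B]
    (p : E → B) (hpc : Continuous p)
    (hequiv : ∀ (g : G) (e : E), p (g • e) = g • p e)
    (hfib : IsGFibration G p)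
    (U : Set (E × E))
    (hUinv : ∀ (g : G) (z : E × E), z ∈ U → (g • z.1, g • z.2) ∈ U) :
    -- (1) a `G`-equivariant section of `Π` over `U`
    (∃ s : U → C(unitInterval, E), Continuous s ∧
        (∀ u : U, ∃ b : B, ∀ t : unitInterval, p (s u t) = b) ∧
        (∀ u : U, s u 0 = u.1.1 ∧ s u 1 = u.1.2) ∧
        (∀ (g : G) (u : U) (t : unitInterval),
          s ⟨(g • u.1.1, g • u.1.2), hUinv g u.1 u.2⟩ t = g • s u t))
    ↔
    -- (2) a `G`-homotopy in `E ×_B E` from the inclusion of `U` to a map into `Δ(E)`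
    (∃ F : U × unitInterval → E × E, Continuous F ∧
        (∀ (u : U) (t : unitInterval), p (F (u, t)).1 = p (F (u, t)).2) ∧
        (∀ (g : G) (u : U) (t : unitInterval),
          F (⟨(g • u.1.1, g • u.1.2), hUinv g u.1 u.2⟩, t) = (g • (F (u, t)).1, g • (F (u, t)).2)) ∧
        (∀ u : U, F (u, 0) = u.1) ∧
        (∀ u : U, (F (u, 1)).1 = (F (u, 1)).2)) := by
  let _ : MulAction G U := SubMulAction.mulAction ⟨U, fun g z hz => hUinv g z hz⟩
  have : ContinuousSMul G U :=
    ⟨(continuous_fst.smul (continuous_subtype_val.comp continuous_snd)).subtype_mk _⟩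
  constructor
  · rintro ⟨s, hs, hsp, hs01, hsG⟩
    refine ⟨fun y => (s y.1 y.2, y.1.1.2), by fun_prop, fun u t => ?_,
      fun g u t => Prod.ext (hsG g u t) rfl, fun u => Prod.ext (hs01 u).1 rfl, fun u => (hs01 u).2⟩
    obtain ⟨b, hb⟩ := hsp u
    rw [hb, ← hb 1, (hs01 u).2]
  · rintro ⟨F, hF, hFp, hFG, hF0, hF1⟩
    obtain ⟨γ, hγ, hγG, hγp, hγ01⟩ :=
      hfib.exists_fibrewise_paths_of_homotopy_to_diagonal hpc hequiv F hF hFp hFG hF1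
    refine ⟨ContinuousMap.curry ⟨γ, hγ⟩, (ContinuousMap.curry ⟨γ, hγ⟩).continuous,
      fun u => ⟨_, hγp u⟩, fun u => ?_, hγG⟩
    simpa [hF0] using hγ01 u

/-- Let `p : E → B` be a `G`-fibration with parametrized endpoint
`G`-fibration `Π : E^I_B → E ×_B E`, `Π(γ) = (γ(0), γ(1))`.  For a `G`-invariant subset
`U` of `E ×_B E`, there is a `G`-equivariant section of `Π` over `U` if and only if the
inclusion `U ↪ E ×_B E` is `G`-homotopic to a `G`-map with values in the diagonal
`Δ(E)`. -/
theorem equivariant_parametrized_section_iff_compressible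
    (G : Type) [Group G] [TopologicalSpace G]
    {E B : Type} [TopologicalSpace E] [TopologicalSpace B]
    [MulAction G E] [ContinuousSMul G E] [MulAction G B] [ContinuousSMul G B]
    (p : E → B) (hpc : Continuous p)
    (hequiv : ∀ (g : G) (e : E), p (g • e) = g • p e)
    (hfib : IsGFibration G p)
    (U : Set (E × E))
    (hUsub : U ⊆ {z : E × E | p z.1 = p z.2})
    (hUinv : ∀ (g : G) (z : E × E), z ∈ U → (g • z.1, g • z.2) ∈ U) :
    -- (1) a `G`-equivariant section of `Π` over `U`
    (∃ s : U → C(unitInterval, E), Continuous s ∧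
        (∀ u : U, ∃ b : B, ∀ t : unitInterval, p (s u t) = b) ∧
        (∀ u : U, s u 0 = u.1.1 ∧ s u 1 = u.1.2) ∧
        (∀ (g : G) (u : U) (t : unitInterval),
          s ⟨(g • u.1.1, g • u.1.2), hUinv g u.1 u.2⟩ t = g • s u t))
    ↔
    -- (2) a `G`-homotopy in `E ×_B E` from the inclusion of `U` to a map into `Δ(E)`
    (∃ F : U × unitInterval → E × E, Continuous F ∧
        (∀ (u : U) (t : unitInterval), p (F (u, t)).1 = p (F (u, t)).2) ∧
        (∀ (g : G) (u : U) (t : unitInterval),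
          F (⟨(g • u.1.1, g • u.1.2), hUinv g u.1 u.2⟩, t) = (g • (F (u, t)).1, g • (F (u, t)).2)) ∧
        (∀ u : U, F (u, 0) = u.1) ∧
        (∀ u : U, (F (u, 1)).1 = (F (u, 1)).2)) :=
  equivariant_parametrized_section_iff_compressible_general G p hpc hequiv hfib U hUinv
end

section
/- Let p : E → B be a locally trivial G-fibration with fibre F, where G acts trivially on F. Then the induced map p̄ : E/G → B/G between orbit spaces is a locally trivial fibre bundle with fibre F. -/
open MulAction

/-- Let `p : E → B` be a locally trivial `G`-fibration with fibre `F`,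
where `G` acts trivially on `F`.  Then the induced map `p̄ : E/G → B/G` between orbit
spaces is a locally trivial fibre bundle with fibre `F`. -/
theorem orbit_map_of_locally_trivial_GFibration_locally_trivial
    (G : Type) [Group G] [TopologicalSpace G]
    {E B F : Type} [TopologicalSpace E] [TopologicalSpace B] [TopologicalSpace F]
    [MulAction G E] [ContinuousSMul G E] [MulAction G B] [ContinuousSMul G B]
    (p : E → B) (hpc : Continuous p)
    (hequiv : ∀ (g : G) (e : E), p (g • e) = g • p e)
    -- local `G`-triviality of `p` with fibre `F` (trivial `G`-action on `F`,
    -- diagonal action on `U × F`)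
    (hloctriv : ∀ b : B, ∃ U : Set B, b ∈ U ∧ IsOpen U ∧
      ∃ hUinv : ∀ (g : G) (b' : B), b' ∈ U → g • b' ∈ U,
      ∃ φ : (p ⁻¹' U) ≃ₜ (U × F),
        (∀ x : p ⁻¹' U, ((φ x).1 : B) = p x.1) ∧
        (∀ (g : G) (x : p ⁻¹' U),
          φ ⟨g • x.1, by
            have := hUinv g (p x.1) x.2
            simpa [Set.mem_preimage, hequiv g x.1] using this⟩ =
          (⟨g • ((φ x).1 : B), hUinv g _ (φ x).1.2⟩, (φ x).2))) :
    -- the induced map on orbit spaces is a locally trivial fibre bundle with fibre `F`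
    ∃ pbar : Quotient (orbitRel G E) → Quotient (orbitRel G B),
      Continuous pbar ∧
      (∀ e : E, pbar (Quotient.mk _ e) = Quotient.mk _ (p e)) ∧
      ∀ y : Quotient (orbitRel G B), ∃ V : Set (Quotient (orbitRel G B)),
        y ∈ V ∧ IsOpen V ∧
        ∃ ψ : (pbar ⁻¹' V) ≃ₜ (V × F),
          ∀ x : pbar ⁻¹' V, ((ψ x).1 : Quotient (orbitRel G B)) = pbar x.1 := by
  classical
  have hwd : ∀ a b : E, (orbitRel G E).r a b →
      Quotient.mk (orbitRel G B) (p a) = Quotient.mk (orbitRel G B) (p b) := by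
    intro a b hab
    obtain ⟨g, hg⟩ := hab
    exact Quotient.sound ⟨g, by rw [← hg, hequiv]⟩
  refine ⟨Quotient.lift (fun e => Quotient.mk (orbitRel G B) (p e)) hwd,
    Continuous.quotient_lift (continuous_quot_mk.comp hpc) hwd, fun e => rfl, ?_⟩
  set pbar : Quotient (orbitRel G E) → Quotient (orbitRel G B) :=
    Quotient.lift (fun e => Quotient.mk (orbitRel G B) (p e)) hwd with hpbar_def
  have hpbarc : Continuous pbar :=
    Continuous.quotient_lift (continuous_quot_mk.comp hpc) hwd
  intro y
  obtain ⟨U, hbU, hUopen, hUinv, φ, hφ1, hφg⟩ := hloctriv y.out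
  -- the open set V in the base orbit space
  set V : Set (Quotient (orbitRel G B)) := Quotient.mk (orbitRel G B) '' U with hV_def
  -- saturation of U
  have hsat : ∀ b' : B, Quotient.mk (orbitRel G B) b' ∈ V ↔ b' ∈ U := by
    intro b'
    constructor
    · rintro ⟨u, huU, huq⟩
      obtain ⟨g, hg⟩ := Quotient.exact huq
      have := hUinv g⁻¹ u huU
      rwa [← hg, inv_smul_smul] at this
    · intro h; exact ⟨b', h, rfl⟩
  have hVopen : IsOpen V := isOpenMap_quotient_mk'_mul U hUopen
  have hyV : y ∈ V := ⟨y.out, hbU, Quotient.out_eq y⟩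
  -- membership transfer on the total space
  have hmemE : ∀ e : E, Quotient.mk (orbitRel G E) e ∈ pbar ⁻¹' V ↔ p e ∈ U :=
    fun e => hsat (p e)
  have hmem1 : ∀ x : (pbar ⁻¹' V : Set _), p (Quotient.out x.1) ∈ U := by
    intro x
    refine (hmemE _).1 ?_
    rw [Quotient.out_eq]; exact x.2
  -- equivariance of φ.symm
  have hφsymm : ∀ (g : G) (u : B) (hu : u ∈ U) (hgu : g • u ∈ U) (f : F),
      ((φ.symm (⟨g • u, hgu⟩, f)) : E) = g • ((φ.symm (⟨u, hu⟩, f)) : E) := by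
    intro g u hu hgu f
    set x : (p ⁻¹' U : Set E) := φ.symm (⟨u, hu⟩, f) with hx
    have hmem : g • (x : E) ∈ p ⁻¹' U := by
      have := hUinv g (p x.1) x.2
      simpa [Set.mem_preimage, hequiv g x.1] using this
    have h1 : φ ⟨g • (x : E), hmem⟩ = (⟨g • ((φ x).1 : B), hUinv g _ (φ x).1.2⟩, (φ x).2) :=
      hφg g x
    have h2 : φ x = (⟨u, hu⟩, f) := by rw [hx, Homeomorph.apply_symm_apply]
    have h3 : φ ⟨g • (x : E), hmem⟩ = (⟨g • u, hgu⟩, f) := by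
      rw [h1, h2]
    have h4 : (⟨g • (x : E), hmem⟩ : (p ⁻¹' U : Set E)) = φ.symm (⟨g • u, hgu⟩, f) := by
      rw [← h3, Homeomorph.symm_apply_apply]
    rw [← h4]
  -- well-definedness of the forward map
  have hT : ∀ (e e' : E) (he : p e ∈ U) (he' : p e' ∈ U), (orbitRel G E).r e' e →
      (Quotient.mk (orbitRel G B) ((φ ⟨e, he⟩).1 : B) =
        Quotient.mk (orbitRel G B) ((φ ⟨e', he'⟩).1 : B)) ∧
      (φ ⟨e, he⟩).2 = (φ ⟨e', he'⟩).2 := by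
    intro e e' he he' hrel
    obtain ⟨g, hg⟩ := hrel
    have hmem : g • e ∈ p ⁻¹' U := by
      have := hUinv g (p e) he
      simpa [Set.mem_preimage, hequiv g e] using this
    have hsub : (⟨e', he'⟩ : (p ⁻¹' U : Set E)) = ⟨g • e, hmem⟩ := Subtype.ext hg.symm
    have h1 : φ ⟨g • e, hmem⟩ =
        (⟨g • ((φ ⟨e, he⟩).1 : B), hUinv g _ (φ ⟨e, he⟩).1.2⟩, (φ ⟨e, he⟩).2) :=
      hφg g ⟨e, he⟩
    have hq : Quotient.mk (orbitRel G B) (g • ((φ ⟨e, he⟩).1 : B)) =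
        Quotient.mk (orbitRel G B) ((φ ⟨e, he⟩).1 : B) := Quotient.sound ⟨g, rfl⟩
    rw [hsub, h1]
    exact ⟨hq.symm, rfl⟩
  -- forward map data
  have htoV : ∀ x : (pbar ⁻¹' V : Set _),
      (Quotient.mk (orbitRel G B) ((φ ⟨Quotient.out x.1, hmem1 x⟩).1 : B)) ∈ V :=
    fun x => ⟨((φ ⟨Quotient.out x.1, hmem1 x⟩).1 : B), (φ ⟨Quotient.out x.1, hmem1 x⟩).1.2, rfl⟩
  -- inverse map data
  have hmem2 : ∀ z : (↥V) × F, Quotient.out (z.1 : Quotient (orbitRel G B)) ∈ U := by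
    intro z
    refine (hsat _).1 ?_
    rw [Quotient.out_eq]; exact z.1.2
  have hinvmem : ∀ z : (↥V) × F,
      Quotient.mk (orbitRel G E) ((φ.symm (⟨Quotient.out (z.1 : Quotient (orbitRel G B)), hmem2 z⟩, z.2) : E))
        ∈ pbar ⁻¹' V := by
    intro z
    have h1 : p ((φ.symm (⟨Quotient.out (z.1 : Quotient (orbitRel G B)), hmem2 z⟩, z.2) : E)) =
        Quotient.out (z.1 : Quotient (orbitRel G B)) := by
      rw [← hφ1, Homeomorph.apply_symm_apply]
    refine (hmemE _).2 ?_
    rw [h1]; exact hmem2 z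
  -- well-definedness of the inverse map
  have hS : ∀ (u u' : B) (hu : u ∈ U) (hu' : u' ∈ U) (f : F), (orbitRel G B).r u' u →
      Quotient.mk (orbitRel G E) ((φ.symm (⟨u, hu⟩, f)) : E) =
        Quotient.mk (orbitRel G E) ((φ.symm (⟨u', hu'⟩, f)) : E) := by
    intro u u' hu hu' f hrel
    obtain ⟨g, hg⟩ := hrel
    have hgu : g • u ∈ U := hUinv g u hu
    have h1 : ((φ.symm (⟨u', hu'⟩, f)) : E) = g • ((φ.symm (⟨u, hu⟩, f)) : E) := by
      have := hφsymm g u hu hgu f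
      have he : (⟨u', hu'⟩ : (U : Set B)) = ⟨g • u, hgu⟩ := Subtype.ext hg.symm
      rw [he]; exact this
    have hq : Quotient.mk (orbitRel G E) (g • ((φ.symm (⟨u, hu⟩, f)) : E)) =
        Quotient.mk (orbitRel G E) ((φ.symm (⟨u, hu⟩, f)) : E) := Quotient.sound ⟨g, rfl⟩
    rw [h1]
    exact hq.symm
  refine ⟨V, hyV, hVopen, ?_⟩
  refine ⟨{
      toFun := fun x => (⟨Quotient.mk (orbitRel G B) ((φ ⟨Quotient.out x.1, hmem1 x⟩).1 : B), htoV x⟩,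
        (φ ⟨Quotient.out x.1, hmem1 x⟩).2)
      invFun := fun z => ⟨Quotient.mk (orbitRel G E)
        ((φ.symm (⟨Quotient.out (z.1 : Quotient (orbitRel G B)), hmem2 z⟩, z.2) : E)), hinvmem z⟩
      left_inv := ?_
      right_inv := ?_
      continuous_toFun := ?_
      continuous_invFun := ?_ }, ?_⟩
  · -- left inverse
    intro x
    set X : (p ⁻¹' U : Set E) := ⟨Quotient.out x.1, hmem1 x⟩ with hX
    have h1 := hS ((φ X).1 : B) (Quotient.out (Quotient.mk (orbitRel G B) ((φ X).1 : B)))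
      (φ X).1.2 ((hsat _).1 (by rw [Quotient.out_eq]; exact htoV x)) (φ X).2
      (Quotient.exact (Quotient.out_eq _))
    have h3 : Quotient.mk (orbitRel G E) ((φ.symm (⟨((φ X).1 : B), (φ X).1.2⟩, (φ X).2) : E))
        = x.1 := by
      have he : ((⟨((φ X).1 : B), (φ X).1.2⟩, (φ X).2) : ↥U × F) = φ X := rfl
      rw [he, Homeomorph.symm_apply_apply]
      exact Quotient.out_eq x.1
    exact Subtype.ext (h1.symm.trans h3)
  · -- right inverse
    intro z
    set e : (p ⁻¹' U : Set E) := φ.symm (⟨Quotient.out (z.1 : Quotient (orbitRel G B)), hmem2 z⟩, z.2) with he_def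
    have hrel : (orbitRel G E).r (e : E) (Quotient.out (Quotient.mk (orbitRel G E) (e : E))) :=
      Quotient.exact ((Quotient.out_eq _).symm)
    obtain ⟨h1, h2⟩ := hT (Quotient.out (Quotient.mk (orbitRel G E) (e : E))) (e : E)
      (hmem1 ⟨_, hinvmem z⟩) e.2 hrel
    have h3 : φ (⟨(e : E), e.2⟩ : (p ⁻¹' U : Set E)) =
        (⟨Quotient.out (z.1 : Quotient (orbitRel G B)), hmem2 z⟩, z.2) := by
      have he : (⟨(e : E), e.2⟩ : (p ⁻¹' U : Set E)) = e := rfl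
      rw [he, he_def, Homeomorph.apply_symm_apply]
    refine Prod.ext (Subtype.ext ?_) ?_
    · refine (h1.trans ?_)
      rw [h3]
      exact Quotient.out_eq _
    · rw [h2, h3]
  · -- continuity of the forward map
    have hqE : Topology.IsQuotientMap (Quotient.mk (orbitRel G E)) :=
      MulAction.isOpenQuotientMap_quotientMk.isQuotientMap
    have hres : Topology.IsQuotientMap ((pbar ⁻¹' V).restrictPreimage (Quotient.mk (orbitRel G E))) :=
      hqE.restrictPreimage_isOpen (hVopen.preimage hpbarc)
    refine hres.continuous_iff.mpr ?_
    have hcont1 : Continuous (fun w : (Quotient.mk (orbitRel G E) ⁻¹' (pbar ⁻¹' V) : Set E) =>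
        φ ⟨w.1, (hmemE w.1).1 w.2⟩) :=
      φ.continuous.comp (continuous_subtype_val.subtype_mk _)
    have hcont2 : Continuous (fun w : (Quotient.mk (orbitRel G E) ⁻¹' (pbar ⁻¹' V) : Set E) =>
        ((⟨Quotient.mk (orbitRel G B) ((φ ⟨w.1, (hmemE w.1).1 w.2⟩).1 : B),
            ⟨_, (φ ⟨w.1, (hmemE w.1).1 w.2⟩).1.2, rfl⟩⟩ : V),
          (φ ⟨w.1, (hmemE w.1).1 w.2⟩).2)) := by
      refine Continuous.prodMk (Continuous.subtype_mk ?_ _) (continuous_snd.comp hcont1)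
      exact continuous_quot_mk.comp (continuous_subtype_val.comp (continuous_fst.comp hcont1))
    refine hcont2.congr ?_
    intro w
    obtain ⟨h1, h2⟩ := hT (Quotient.out (Quotient.mk (orbitRel G E) w.1)) w.1
      (hmem1 ⟨_, w.2⟩) ((hmemE w.1).1 w.2)
      (Quotient.exact ((Quotient.out_eq _).symm))
    exact Prod.ext (Subtype.ext h1.symm) h2.symm
  · -- continuity of the inverse map
    have hqB : IsOpenQuotientMap (Quotient.mk (orbitRel G B)) :=
      MulAction.isOpenQuotientMap_quotientMk
    have hresB : IsOpenQuotientMap (V.restrictPreimage (Quotient.mk (orbitRel G B))) :=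
      ⟨hqB.surjective.restrictPreimage _, hqB.continuous.restrictPreimage,
        hqB.isOpenMap.restrictPreimage _⟩
    have hprod : IsOpenQuotientMap
        (Prod.map (V.restrictPreimage (Quotient.mk (orbitRel G B))) (id : F → F)) :=
      hresB.prodMap IsOpenQuotientMap.id
    refine hprod.continuous_comp_iff.mp ?_
    have hcont1 : Continuous (fun w : (Quotient.mk (orbitRel G B) ⁻¹' V : Set _) × F =>
        φ.symm (⟨w.1.1, (hsat w.1.1).1 w.1.2⟩, w.2)) :=
      φ.symm.continuous.comp
        (Continuous.prodMk ((continuous_subtype_val.comp continuous_fst).subtype_mk _)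
          continuous_snd)
    have hmemInv : ∀ w : (Quotient.mk (orbitRel G B) ⁻¹' V : Set _) × F,
        Quotient.mk (orbitRel G E) ((φ.symm (⟨w.1.1, (hsat w.1.1).1 w.1.2⟩, w.2) : E))
          ∈ pbar ⁻¹' V := by
      intro w
      refine (hmemE _).2 ?_
      rw [← hφ1, Homeomorph.apply_symm_apply]
      exact (hsat w.1.1).1 w.1.2
    have hcont2 : Continuous (fun w : (Quotient.mk (orbitRel G B) ⁻¹' V : Set _) × F =>
        (⟨Quotient.mk (orbitRel G E) ((φ.symm (⟨w.1.1, (hsat w.1.1).1 w.1.2⟩, w.2) : E)),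
          hmemInv w⟩ : (pbar ⁻¹' V : Set _))) :=
      Continuous.subtype_mk (continuous_quot_mk.comp (continuous_subtype_val.comp hcont1)) _
    refine hcont2.congr ?_
    intro w
    refine Subtype.ext ?_
    exact hS w.1.1 (Quotient.out (Quotient.mk (orbitRel G B) w.1.1)) ((hsat w.1.1).1 w.1.2)
      ((hsat _).1 (by rw [Quotient.out_eq]; exact w.1.2)) w.2
      (Quotient.exact (Quotient.out_eq _))
  · intro x
    show Quotient.mk (orbitRel G B) ((φ ⟨Quotient.out x.1, hmem1 x⟩).1 : B) = pbar x.1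
    rw [hφ1]
    conv_rhs => rw [← Quotient.out_eq x.1]
    rfl
end

section
/- Let p : E → B be a G-fibration such that G acts freely on B, and let K ≤ G be a subgroup such that p is also a K-fibration. Then the invariant parametrized topological complexity satisfies TC^K[p : E → B] ≤ TC^G[p : E → B]. The key step: if s is a (G×G)-equivariant section of Ψ_G over a (G×G)-invariant open U ⊆ E ×_{B/G} E, then s restricts to a (K×K)-equivariant section of Ψ_K over V = U ∩ (E ×_{B/K} E), using that freeness of the G-action on B forces the group element relating the endpoints to lie in K. -/
/-- A path lies in a single fibre of `p`. -/
def fibrePath {E B : Type} [TopologicalSpace E] (p : E → B) (γ : C(unitInterval, E)) : Prop :=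
  ∃ b : B, ∀ t : unitInterval, p (γ t) = b

/-- The base `E ×_{B/G} E` of the invariant parametrized fibration. -/
def invBase (G : Type) {E B : Type} (aB : G → B → B) (p : E → B) : Set (E × E) :=
  {z | ∃ g : G, p z.1 = aB g (p z.2)}

/-- A `(G×G)`-equivariant section of `Ψ_G : E^I_B ×_{E/G} E^I_B → E ×_{B/G} E` over `U`. -/
def InvSecOver (G : Type) {E B : Type} [TopologicalSpace E]
    (aE : G → E → E) (p : E → B) (U : Set (E × E)) : Prop :=
  ∃ s : U → C(unitInterval, E) × C(unitInterval, E),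
    Continuous s ∧
    (∀ u : U, fibrePath p (s u).1 ∧ fibrePath p (s u).2) ∧
    (∀ u : U, ∃ g : G, (s u).2 0 = aE g ((s u).1 1)) ∧
    (∀ u : U, (s u).1 0 = u.1.1 ∧ (s u).2 1 = u.1.2) ∧
    (∀ (g₁ g₂ : G) (u : U) (hu : (aE g₁ u.1.1, aE g₂ u.1.2) ∈ U),
      ∀ t : unitInterval,
        (s ⟨_, hu⟩).1 t = aE g₁ ((s u).1 t) ∧ (s ⟨_, hu⟩).2 t = aE g₂ ((s u).2 t))

/-- `TC^G[p : E → B] ≤ n`. -/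
def InvPTCle (G : Type) {E B : Type} [TopologicalSpace E] [TopologicalSpace B]
    (aE : G → E → E) (aB : G → B → B) (p : E → B) (n : ℕ) : Prop :=
  ∃ U : Fin n → Set (E × E),
    (∀ i, ∃ V : Set (E × E), IsOpen V ∧ U i = V ∩ invBase G aB p) ∧
    (∀ i (g₁ g₂ : G) (z : E × E), z ∈ U i → (aE g₁ z.1, aE g₂ z.2) ∈ U i) ∧
    invBase G aB p ⊆ (⋃ i, U i) ∧
    ∀ i, InvSecOver G aE p (U i)

/-- The invariant parametrized topological complexity `TC^G[p : E → B]`. -/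
noncomputable def invPTC (G : Type) {E B : Type} [TopologicalSpace E] [TopologicalSpace B]
    (aE : G → E → E) (aB : G → B → B) (p : E → B) : ℕ∞ :=
  sInf {n : ℕ∞ | ∃ k : ℕ, n = (k : ℕ∞) ∧ InvPTCle G aE aB p k}

/-- Let `p : E → B` be a `G`-fibration such that `G` acts freely on
`B`, and let `K ≤ G` be a subgroup such that `p` is also a `K`-fibration.  Then every
`(G×G)`-equivariant section of `Ψ_G` over a `(G×G)`-invariant `U` restricts to a
`(K×K)`-equivariant section of `Ψ_K` over `V = U ∩ (E ×_{B/K} E)` (the connecting group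
element must lie in `K` by freeness), and `TC^K[p : E → B] ≤ TC^G[p : E → B]`. -/
theorem invPTC_subgroup_le (G : Type) [Group G] [TopologicalSpace G]
    {E B : Type} [TopologicalSpace E] [TopologicalSpace B]
    [MulAction G E] [ContinuousSMul G E] [MulAction G B] [ContinuousSMul G B]
    (K : Subgroup G)
    (p : E → B) (hpc : Continuous p)
    (hequiv : ∀ (g : G) (e : E), p (g • e) = g • p e)
    (hGfib : IsGFibration G p) (hKfib : IsGFibration (↥K) p)
    (hfree : ∀ (g : G) (b : B), g • b = b → g = 1) :
    -- the key step: the connecting group element of the section lies in `K` over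
    -- `V = U ∩ (E ×_{B/K} E)`, so the section restricts to a `(K×K)`-equivariant
    -- section of `Ψ_K`
    (∀ (U : Set (E × E)), U ⊆ invBase G (fun (g : G) (b : B) => g • b) p →
      (∀ (g₁ g₂ : G) (z : E × E), z ∈ U → (g₁ • z.1, g₂ • z.2) ∈ U) →
      ∀ s : U → C(unitInterval, E) × C(unitInterval, E),
        (∀ u : U, fibrePath p (s u).1 ∧ fibrePath p (s u).2) →
        (∀ u : U, ∃ g : G, (s u).2 0 = g • ((s u).1 1)) →
        (∀ u : U, (s u).1 0 = u.1.1 ∧ (s u).2 1 = u.1.2) →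
        ∀ u : U, u.1 ∈ invBase (↥K) (fun (k : ↥K) (b : B) => (k : G) • b) p →
          ∃ k : K, (s u).2 0 = (k : G) • ((s u).1 1)) ∧
    -- consequently `TC^K[p] ≤ TC^G[p]`
    invPTC (↥K) (fun (k : ↥K) (e : E) => (k : G) • e)
        (fun (k : ↥K) (b : B) => (k : G) • b) p
      ≤ invPTC G (fun (g : G) (e : E) => g • e) (fun (g : G) (b : B) => g • b) p := by
  have hKG : invBase (↥K) (fun (k : ↥K) (b : B) => (k : G) • b) p ⊆
      invBase G (fun (g : G) (b : B) => g • b) p := by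
    rintro z ⟨k, hk⟩; exact ⟨(k : G), hk⟩
  have key : ∀ (U : Set (E × E)), U ⊆ invBase G (fun (g : G) (b : B) => g • b) p →
      (∀ (g₁ g₂ : G) (z : E × E), z ∈ U → (g₁ • z.1, g₂ • z.2) ∈ U) →
      ∀ s : U → C(unitInterval, E) × C(unitInterval, E),
        (∀ u : U, fibrePath p (s u).1 ∧ fibrePath p (s u).2) →
        (∀ u : U, ∃ g : G, (s u).2 0 = g • ((s u).1 1)) →
        (∀ u : U, (s u).1 0 = u.1.1 ∧ (s u).2 1 = u.1.2) →
        ∀ u : U, u.1 ∈ invBase (↥K) (fun (k : ↥K) (b : B) => (k : G) • b) p →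
          ∃ k : K, (s u).2 0 = (k : G) • ((s u).1 1) := by
    intro U hUsub hUinv s hfib hconn hend u hK
    obtain ⟨k, hk⟩ := hK
    obtain ⟨g, hg⟩ := hconn u
    obtain ⟨⟨b₁, hb₁⟩, ⟨b₂, hb₂⟩⟩ := hfib u
    obtain ⟨h0, h1⟩ := hend u
    have e1 : p ((s u).1 1) = p u.1.1 := by rw [hb₁ 1, ← hb₁ 0, h0]
    have e2 : p ((s u).2 0) = p u.1.2 := by rw [hb₂ 0, ← hb₂ 1, h1]
    have hfix : (g * (k : G)) • p u.1.2 = p u.1.2 := by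
      have hpg := congrArg p hg
      rw [hequiv, e1, e2, hk] at hpg
      rw [mul_smul]; exact hpg.symm
    have hgk : g * (k : G) = 1 := hfree _ _ hfix
    have hginv : g = (k : G)⁻¹ := eq_inv_of_mul_eq_one_left hgk
    refine ⟨k⁻¹, ?_⟩
    rw [hg, hginv]
    simp
  refine ⟨key, sInf_le_sInf ?_⟩
  rintro n ⟨m, rfl, U, hopen, hinv, hcov, hsec⟩
  refine ⟨m, rfl, fun i => U i ∩ invBase (↥K) (fun (k : ↥K) (b : B) => (k : G) • b) p,
    ?_, ?_, ?_, ?_⟩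
  · intro i
    obtain ⟨V, hV, hUV⟩ := hopen i
    refine ⟨V, hV, ?_⟩
    show U i ∩ invBase (↥K) (fun (k : ↥K) (b : B) => (k : G) • b) p = _
    rw [hUV, Set.inter_assoc, Set.inter_eq_self_of_subset_right hKG]
  · rintro i k₁ k₂ z ⟨hz1, k, hk⟩
    refine ⟨hinv i (k₁ : G) (k₂ : G) z hz1, k₁ * k * k₂⁻¹, ?_⟩
    show p ((k₁ : G) • z.1) = ((k₁ * k * k₂⁻¹ : K) : G) • p ((k₂ : G) • z.2)
    rw [hequiv, hequiv, hk, smul_smul, smul_smul]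
    congr 1
    push_cast
    group
  · intro z hz
    obtain ⟨i, hi⟩ := Set.mem_iUnion.mp (hcov (hKG hz))
    exact Set.mem_iUnion.mpr ⟨i, hi, hz⟩
  · intro i
    obtain ⟨s, hs_cont, hfib, hconn, hend, heq⟩ := hsec i
    have hUsub : U i ⊆ invBase G (fun (g : G) (b : B) => g • b) p := by
      obtain ⟨V, _, hUV⟩ := hopen i
      rw [hUV]; exact Set.inter_subset_right
    refine ⟨fun v => s ⟨v.1, v.2.1⟩, ?_, ?_, ?_, ?_, ?_⟩
    · exact hs_cont.comp (Continuous.subtype_mk continuous_subtype_val _)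
    · exact fun v => hfib ⟨v.1, v.2.1⟩
    · intro v
      obtain ⟨k, hkk⟩ := key (U i) hUsub (hinv i) s hfib hconn hend ⟨v.1, v.2.1⟩ v.2.2
      exact ⟨k, hkk⟩
    · exact fun v => hend ⟨v.1, v.2.1⟩
    · intro k₁ k₂ v hv t
      exact heq (k₁ : G) (k₂ : G) ⟨v.1, v.2.1⟩ hv.1 t
end

section
/- Let G be a compact Hausdorff topological group acting on spaces E and B, and let p : E → B be a G-fibration. Let e ∈ E be a G-fixed point and F = p⁻¹(p(e)) the fibre through e. If F admits a strong G-deformation retraction to the point e, then the fibre Ψ⁻¹(e,e) of the invariant parametrized fibration Ψ is (G×G)-contractible; here Ψ⁻¹(e,e) is (G×G)-homeomorphic to the space 𝓕 = {γ ∈ F^I : γ(1/2) = e and γ(0) = g·γ(1) for some g ∈ G} with the action (g₁,g₂)·γ equal to g₁·γ(t) for t ≤ 1/2 and g₂·γ(t) for t ≥ 1/2. -/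
/-- The midpoint of the unit interval. -/
noncomputable def half : unitInterval := ⟨1 / 2, by norm_num⟩

/-!
Concatenating the reverses of `α` and `β` identifies a pair `(α, β)` in `Ψ⁻¹(e, e)` with a loop
in `𝓕`, and turns the action of `(g₁, g₂)` on the pair into the piecewise action on the loop.
Applying the deformation retraction `H` pointwise, `K (γ, s) t = H (γ t, s)`, contracts `𝓕`:
the condition `γ (1/2) = e` survives because `H` fixes `e`, and both `γ 0 ∈ G • γ 1` and the
piecewise action survive because `H` is `G`-equivariant.
-/

open unitInterval Set

namespace unitInterval

noncomputable def firstHalfRev : C(I, I) :=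
  ⟨fun t => ⟨(1 - t) / 2, by constructor <;> linarith [t.2.1, t.2.2]⟩, by fun_prop⟩

noncomputable def secondHalfRev : C(I, I) :=
  ⟨fun t => ⟨1 - t / 2, by constructor <;> linarith [t.2.1, t.2.2]⟩, by fun_prop⟩

@[simp] lemma coe_firstHalfRev (t : I) : (firstHalfRev t : ℝ) = (1 - t) / 2 := rfl
@[simp] lemma coe_secondHalfRev (t : I) : (secondHalfRev t : ℝ) = 1 - t / 2 := rfl

lemma firstHalfRev_zero : firstHalfRev 0 = half := Subtype.ext (by norm_num [half])
lemma firstHalfRev_one : firstHalfRev 1 = 0 := Subtype.ext (by norm_num)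
lemma secondHalfRev_zero : secondHalfRev 0 = 1 := Subtype.ext (by norm_num)
lemma secondHalfRev_one : secondHalfRev 1 = half := Subtype.ext (by norm_num [half])

end unitInterval

section RevConcat

variable {E : Type*} [TopologicalSpace E]

/-- The concatenation of the reverses of `a` and `b`, a path when `a 0 = b 1`. -/
noncomputable def revConcat (a b : C(I, E)) (t : I) : E :=
  if (t : ℝ) ≤ 1 / 2 then IccExtend zero_le_one a (1 - 2 * t)
  else IccExtend zero_le_one b (2 - 2 * t)

lemma continuous_revConcat {X : Type*} [TopologicalSpace X] {a b : X → C(I, E)}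
    (ha : Continuous a) (hb : Continuous b) (hab : ∀ x, a x 0 = b x 1) :
    Continuous fun q : X × I => revConcat (a q.1) (b q.1) q.2 := by
  refine Continuous.if_le ?_ ?_ (by fun_prop) continuous_const ?_
  · exact Continuous.IccExtend (f := fun q : X × I => a q.1) (by fun_prop) (by fun_prop)
  · exact Continuous.IccExtend (f := fun q : X × I => b q.1) (by fun_prop) (by fun_prop)
  · intro q hq
    rw [hq, show (1 : ℝ) - 2 * (1 / 2) = (0 : I) by norm_num,
      show (2 : ℝ) - 2 * (1 / 2) = (1 : I) by norm_num, IccExtend_val, IccExtend_val, hab]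

lemma revConcat_zero (a b : C(I, E)) : revConcat a b 0 = a 1 := by
  rw [revConcat, if_pos (by norm_num), show (1 : ℝ) - 2 * (0 : I) = (1 : I) by norm_num,
    IccExtend_val]

lemma revConcat_half (a b : C(I, E)) : revConcat a b half = a 0 := by
  rw [revConcat, if_pos (by norm_num [half]),
    show (1 : ℝ) - 2 * half = (0 : I) by norm_num [half], IccExtend_val]

lemma revConcat_one (a b : C(I, E)) : revConcat a b 1 = b 0 := by
  rw [revConcat, if_neg (by norm_num), show (2 : ℝ) - 2 * (1 : I) = (0 : I) by norm_num,
    IccExtend_val]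

lemma revConcat_firstHalfRev (a b : C(I, E)) (t : I) : revConcat a b (firstHalfRev t) = a t := by
  rw [revConcat, if_pos (by rw [coe_firstHalfRev]; linarith [t.2.1]),
    show (1 : ℝ) - 2 * firstHalfRev t = t by rw [coe_firstHalfRev]; ring, IccExtend_val]

lemma revConcat_secondHalfRev {a b : C(I, E)} (hab : a 0 = b 1) (t : I) :
    revConcat a b (secondHalfRev t) = b t := by
  by_cases ht : (t : ℝ) = 1
  · rw [show t = 1 from Subtype.ext ht, secondHalfRev_one, revConcat_half, hab]
  · rw [revConcat, if_neg (by rw [coe_secondHalfRev]; linarith [lt_of_le_of_ne t.2.2 ht]),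
      show (2 : ℝ) - 2 * secondHalfRev t = t by rw [coe_secondHalfRev]; ring, IccExtend_val]

lemma revConcat_comp_firstHalfRev_comp_secondHalfRev (γ : C(I, E)) :
    revConcat (γ.comp firstHalfRev) (γ.comp secondHalfRev) = γ := by
  funext t
  have key : ∀ {s : ℝ} (hs : s ∈ I), ∀ c : C(I, I), (c ⟨s, hs⟩ : ℝ) = t →
      IccExtend zero_le_one (γ.comp c) s = γ t := fun hs c hc => by
    rw [IccExtend_of_mem _ _ hs, ContinuousMap.comp_apply, Subtype.ext hc]
  unfold revConcat
  split_ifs with ht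
  · exact key ⟨by linarith, by linarith [t.2.1]⟩ firstHalfRev (by simp)
  · exact key ⟨by linarith [t.2.2], by linarith⟩ secondHalfRev (by rw [coe_secondHalfRev]; ring)

lemma revConcat_mem {P : E → Prop} {a b : C(I, E)} (ha : ∀ t, P (a t)) (hb : ∀ t, P (b t))
    (t : I) : P (revConcat a b t) := by
  unfold revConcat IccExtend
  split_ifs
  exacts [ha _, hb _]

noncomputable def revConcatCM (a b : C(I, E)) (hab : a 0 = b 1) : C(I, E) :=
  ⟨revConcat a b, (continuous_revConcat (a := fun _ : Unit => a) (b := fun _ => b)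
    continuous_const continuous_const fun _ => hab).comp (Continuous.prodMk_right ())⟩

end RevConcat

section Fibre

variable (G : Type*) {E B : Type*} [TopologicalSpace E] [SMul G E] (p : E → B) (e : E)

/-- The space `𝓕`. -/
def twistedLoops : Set C(I, E) :=
  {γ | (∀ t, p (γ t) = p e) ∧ γ half = e ∧ ∃ g : G, γ 0 = g • γ 1}

/-- The fibre `Ψ⁻¹(e, e)`. -/
def psiFibre : Set (C(I, E) × C(I, E)) :=
  {x | (∃ b, ∀ t, p (x.1 t) = b) ∧ (∃ b, ∀ t, p (x.2 t) = b) ∧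
    (∃ g : G, x.1 1 = g • x.2 0) ∧ x.1 0 = e ∧ x.2 1 = e}

variable {G p e}

lemma apply_fst_of_mem_psiFibre {x : C(I, E) × C(I, E)} (hx : x ∈ psiFibre G p e) (t : I) :
    p (x.1 t) = p e := by
  obtain ⟨⟨b, hb⟩, -, -, h0, -⟩ := hx
  rw [hb, ← hb 0, h0]

lemma apply_snd_of_mem_psiFibre {x : C(I, E) × C(I, E)} (hx : x ∈ psiFibre G p e) (t : I) :
    p (x.2 t) = p e := by
  obtain ⟨-, ⟨b, hb⟩, -, -, h1⟩ := hx
  rw [hb, ← hb 1, h1]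

lemma fst_zero_eq_snd_one_of_mem_psiFibre {x : C(I, E) × C(I, E)} (hx : x ∈ psiFibre G p e) :
    x.1 0 = x.2 1 :=
  hx.2.2.2.1.trans hx.2.2.2.2.symm

lemma revConcatCM_mem_twistedLoops {x : C(I, E) × C(I, E)} (hx : x ∈ psiFibre G p e) :
    revConcatCM x.1 x.2 (fst_zero_eq_snd_one_of_mem_psiFibre hx) ∈ twistedLoops G p e := by
  obtain ⟨g, hg⟩ := hx.2.2.1
  refine ⟨revConcat_mem (P := (p · = p e)) (apply_fst_of_mem_psiFibre hx)
    (apply_snd_of_mem_psiFibre hx), ?_, g, ?_⟩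
  · exact (revConcat_half _ _).trans hx.2.2.2.1
  · exact (revConcat_zero _ _).trans (hg.trans (congrArg _ (revConcat_one _ _).symm))

lemma halves_mem_psiFibre {γ : C(I, E)} (hγ : γ ∈ twistedLoops G p e) :
    (γ.comp firstHalfRev, γ.comp secondHalfRev) ∈ psiFibre G p e := by
  obtain ⟨hp, hhalf, g, hg⟩ := hγ
  refine ⟨⟨p e, fun t => hp _⟩, ⟨p e, fun t => hp _⟩, ⟨g, ?_⟩, ?_, ?_⟩ <;>
    simp only [ContinuousMap.comp_apply, firstHalfRev_zero, firstHalfRev_one, secondHalfRev_zero,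
      secondHalfRev_one]
  exacts [hg, hhalf, hhalf]

/-- `(α, β) ↦ ᾱ · β̄`, inverse to splitting a loop at `1/2` into its two reversed halves. -/
noncomputable def psiFibreHomeomorph : psiFibre G p e ≃ₜ twistedLoops G p e where
  toFun x := ⟨_, revConcatCM_mem_twistedLoops x.2⟩
  invFun γ := ⟨_, halves_mem_psiFibre γ.2⟩
  left_inv x := by
    ext t : 3
    exacts [revConcat_firstHalfRev _ _ t,
      revConcat_secondHalfRev (fst_zero_eq_snd_one_of_mem_psiFibre x.2) t]
  right_inv γ := Subtype.ext (ContinuousMap.ext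
    (congrFun (revConcat_comp_firstHalfRev_comp_secondHalfRev γ.1)))
  continuous_toFun := by
    refine Continuous.subtype_mk (ContinuousMap.continuous_of_continuous_uncurry _ ?_) _
    exact continuous_revConcat (continuous_fst.comp continuous_subtype_val)
      (continuous_snd.comp continuous_subtype_val)
      fun x => fst_zero_eq_snd_one_of_mem_psiFibre x.2
  continuous_invFun := by
    refine Continuous.subtype_mk ?_ _
    exact ((ContinuousMap.continuous_precomp _).comp continuous_subtype_val).prodMk
      ((ContinuousMap.continuous_precomp _).comp continuous_subtype_val)

lemma psiFibreHomeomorph_apply_of_smul {g₁ g₂ : G} {x x' : psiFibre G p e}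
    (h : ∀ t, x'.1.1 t = g₁ • x.1.1 t ∧ x'.1.2 t = g₂ • x.1.2 t) (t : I) :
    (psiFibreHomeomorph x').1 t =
      if (t : ℝ) ≤ 1 / 2 then g₁ • (psiFibreHomeomorph x).1 t
      else g₂ • (psiFibreHomeomorph x).1 t := by
  change revConcat _ _ t = if (t : ℝ) ≤ 1 / 2 then g₁ • revConcat _ _ t else g₂ • revConcat _ _ t
  unfold revConcat IccExtend
  split_ifs
  exacts [(h _).1, (h _).2]

end Fibre

lemma apply_eq_smul_of_eq_smul {G E X : Type*} [SMul G E] {P : E → Prop}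
    {H : {x // P x} × X → E}
    (hH : ∀ (g : G) (z : {x // P x}) (s : X) (hz : P (g • z.1)),
      H (⟨g • z.1, hz⟩, s) = g • H (z, s))
    {g : G} {y z : {x // P x}} (h : y.1 = g • z.1) (s : X) : H (y, s) = g • H (z, s) := by
  obtain ⟨y, hy⟩ := y
  subst h
  exact hH g z s hy

section Pathwise

variable {G E : Type*} [TopologicalSpace E] {P : E → Prop}

def pathwiseHomotopy (H : C({x // P x} × I, E)) (S : Set C(I, E)) (hS : ∀ γ ∈ S, ∀ t, P (γ t))
    (q : S × I) : C(I, E) :=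
  ⟨fun t => H (⟨q.1.1 t, hS _ q.1.2 t⟩, q.2), by fun_prop⟩

variable (H : C({x // P x} × I, E)) (S : Set C(I, E)) (hS : ∀ γ ∈ S, ∀ t, P (γ t))

lemma continuous_pathwiseHomotopy : Continuous (pathwiseHomotopy H S hS) := by
  refine ContinuousMap.continuous_of_continuous_uncurry _ (H.continuous.comp ?_)
  refine Continuous.prodMk (Continuous.subtype_mk ?_ _) (by fun_prop)
  exact continuous_eval.comp
    ((continuous_subtype_val.comp (continuous_fst.comp continuous_fst)).prodMk continuous_snd)

lemma pathwiseHomotopy_apply_of_piecewise_smul [SMul G E]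
    (hH : ∀ (g : G) (z : {x // P x}) (s : I) (hz : P (g • z.1)),
      H (⟨g • z.1, hz⟩, s) = g • H (z, s))
    {g₁ g₂ : G} {γ γ' : S}
    (h : ∀ t : I, γ'.1 t = if (t : ℝ) ≤ 1 / 2 then g₁ • γ.1 t else g₂ • γ.1 t)
    (s t : I) :
    pathwiseHomotopy H S hS (γ', s) t =
      if (t : ℝ) ≤ 1 / 2 then g₁ • pathwiseHomotopy H S hS (γ, s) t
      else g₂ • pathwiseHomotopy H S hS (γ, s) t := by
  have := h t
  split_ifs at this ⊢ <;> exact apply_eq_smul_of_eq_smul hH this s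

end Pathwise

lemma pathwiseHomotopy_mem_twistedLoops {G E B : Type*} [TopologicalSpace E] [SMul G E]
    {p : E → B} {e : E}
    (H : C({x // p x = p e} × I, E)) (hHF : ∀ z t, p (H (z, t)) = p e)
    (hHe : ∀ t, H (⟨e, rfl⟩, t) = e)
    (hH : ∀ (g : G) (z : {x // p x = p e}) (s : I) (hz : p (g • z.1) = p e),
      H (⟨g • z.1, hz⟩, s) = g • H (z, s))
    (γ : twistedLoops G p e) (s : I) :
    pathwiseHomotopy H (twistedLoops G p e) (fun _ hγ => hγ.1) (γ, s) ∈ twistedLoops G p e := by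
  obtain ⟨γ, hp, hhalf, g, hg⟩ := γ
  refine ⟨fun t => hHF _ _, ?_, g, ?_⟩
  · have : (⟨γ half, hp half⟩ : {x // p x = p e}) = ⟨e, rfl⟩ := Subtype.ext hhalf
    exact (congrArg (fun z => H (z, s)) this).trans (hHe s)
  · exact apply_eq_smul_of_eq_smul hH (z := ⟨γ 1, hp 1⟩) hg s

theorem invariant_parametrized_fibre_GxG_contractible_general
    (G : Type) [Group G]
    {E B : Type} [TopologicalSpace E]
    [MulAction G E]
    (p : E → B)
    (e : E)
    -- a strong `G`-deformation retraction of the fibre `F = p⁻¹(p e)` to `e`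
    (Hd : {x : E // p x = p e} × unitInterval → E)
    (hHdc : Continuous Hd)
    (hHdF : ∀ (z : {x : E // p x = p e}) (t : unitInterval), p (Hd (z, t)) = p e)
    (hHd0 : ∀ z : {x : E // p x = p e}, Hd (z, 0) = z.1)
    (hHd1 : ∀ z : {x : E // p x = p e}, Hd (z, 1) = e)
    (hHde : ∀ t : unitInterval, Hd (⟨e, rfl⟩, t) = e)
    (hHdeq : ∀ (g : G) (z : {x : E // p x = p e}) (t : unitInterval)
      (hz : p (g • z.1) = p e), Hd (⟨g • z.1, hz⟩, t) = g • Hd (z, t)) :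
    -- `𝓕` and the fibre of `Ψ` over `(e,e)`
    let Fc : Set C(unitInterval, E) :=
      {γ | (∀ t, p (γ t) = p e) ∧ γ half = e ∧ ∃ g : G, γ 0 = g • γ 1}
    let Fib : Set (C(unitInterval, E) × C(unitInterval, E)) :=
      {x | (∃ b, ∀ t, p (x.1 t) = b) ∧ (∃ b, ∀ t, p (x.2 t) = b) ∧
        (∃ g : G, x.1 1 = g • x.2 0) ∧ x.1 0 = e ∧ x.2 1 = e}
    -- the fibre is `(G×G)`-homeomorphic to `𝓕`, compatibly with the piecewise action
    (∃ φ : Fib ≃ₜ Fc,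
      ∀ (g₁ g₂ : G) (x x' : Fib),
        (∀ t, x'.1.1 t = g₁ • x.1.1 t ∧ x'.1.2 t = g₂ • x.1.2 t) →
        ∀ t : unitInterval,
          (φ x').1 t = if (t : ℝ) ≤ 1 / 2 then g₁ • (φ x).1 t else g₂ • (φ x).1 t) ∧
    -- `𝓕` is `(G×G)`-equivariantly contractible to the constant path at `e`
    (∃ K : Fc × unitInterval → C(unitInterval, E),
      Continuous K ∧
      (∀ (γ : Fc) (s : unitInterval), K (γ, s) ∈ Fc) ∧
      (∀ γ : Fc, K (γ, 0) = γ.1) ∧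
      (∀ (γ : Fc) (t : unitInterval), K (γ, 1) t = e) ∧
      (∀ (g₁ g₂ : G) (γ γ' : Fc),
        (∀ t : unitInterval,
          γ'.1 t = if (t : ℝ) ≤ 1 / 2 then g₁ • γ.1 t else g₂ • γ.1 t) →
        ∀ (s t : unitInterval),
          K (γ', s) t = if (t : ℝ) ≤ 1 / 2 then g₁ • K (γ, s) t else g₂ • K (γ, s) t)) := by
  intro Fc Fib
  let H : C({x // p x = p e} × I, E) := ⟨Hd, hHdc⟩
  refine ⟨⟨psiFibreHomeomorph, fun _ _ _ _ h => psiFibreHomeomorph_apply_of_smul h⟩,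
    pathwiseHomotopy H (twistedLoops G p e) (fun _ hγ => hγ.1),
    continuous_pathwiseHomotopy _ _ _,
    pathwiseHomotopy_mem_twistedLoops H hHdF hHde hHdeq,
    fun _ => ContinuousMap.ext fun _ => hHd0 _, fun _ _ => hHd1 _,
    fun _ _ _ _ h => pathwiseHomotopy_apply_of_piecewise_smul H _ _ hHdeq h⟩

/-- Let `G` be a compact Hausdorff topological group, `p : E → B` a
`G`-fibration, `e ∈ E^G` and `F = p⁻¹(p(e))`.  If `F` admits a strong `G`-deformation
retraction to `e`, then the fibre `Ψ⁻¹(e,e)` of the invariant parametrized fibration is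
`(G×G)`-contractible; it is `(G×G)`-homeomorphic to the space
`𝓕 = {γ ∈ F^I : γ(1/2) = e, γ(0) = g·γ(1) for some g ∈ G}` with the piecewise
`(G×G)`-action, and `𝓕` admits a `(G×G)`-equivariant contraction to the constant path
at `e`. -/
theorem invariant_parametrized_fibre_GxG_contractible
    (G : Type) [Group G] [TopologicalSpace G] [IsTopologicalGroup G]
    [CompactSpace G] [T2Space G]
    {E B : Type} [TopologicalSpace E] [TopologicalSpace B]
    [MulAction G E] [ContinuousSMul G E] [MulAction G B] [ContinuousSMul G B]
    (p : E → B) (hpc : Continuous p)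
    (hequiv : ∀ (g : G) (x : E), p (g • x) = g • p x)
    (hfib : IsGFibration G p)
    (e : E) (hefix : ∀ g : G, g • e = e)
    -- a strong `G`-deformation retraction of the fibre `F = p⁻¹(p e)` to `e`
    (Hd : {x : E // p x = p e} × unitInterval → E)
    (hHdc : Continuous Hd)
    (hHdF : ∀ (z : {x : E // p x = p e}) (t : unitInterval), p (Hd (z, t)) = p e)
    (hHd0 : ∀ z : {x : E // p x = p e}, Hd (z, 0) = z.1)
    (hHd1 : ∀ z : {x : E // p x = p e}, Hd (z, 1) = e)
    (hHde : ∀ t : unitInterval, Hd (⟨e, rfl⟩, t) = e)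
    (hHdeq : ∀ (g : G) (z : {x : E // p x = p e}) (t : unitInterval)
      (hz : p (g • z.1) = p e), Hd (⟨g • z.1, hz⟩, t) = g • Hd (z, t)) :
    -- `𝓕` and the fibre of `Ψ` over `(e,e)`
    let Fc : Set C(unitInterval, E) :=
      {γ | (∀ t, p (γ t) = p e) ∧ γ half = e ∧ ∃ g : G, γ 0 = g • γ 1}
    let Fib : Set (C(unitInterval, E) × C(unitInterval, E)) :=
      {x | (∃ b, ∀ t, p (x.1 t) = b) ∧ (∃ b, ∀ t, p (x.2 t) = b) ∧
        (∃ g : G, x.1 1 = g • x.2 0) ∧ x.1 0 = e ∧ x.2 1 = e}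
    -- the fibre is `(G×G)`-homeomorphic to `𝓕`, compatibly with the piecewise action
    (∃ φ : Fib ≃ₜ Fc,
      ∀ (g₁ g₂ : G) (x x' : Fib),
        (∀ t, x'.1.1 t = g₁ • x.1.1 t ∧ x'.1.2 t = g₂ • x.1.2 t) →
        ∀ t : unitInterval,
          (φ x').1 t = if (t : ℝ) ≤ 1 / 2 then g₁ • (φ x).1 t else g₂ • (φ x).1 t) ∧
    -- `𝓕` is `(G×G)`-equivariantly contractible to the constant path at `e`
    (∃ K : Fc × unitInterval → C(unitInterval, E),
      Continuous K ∧
      (∀ (γ : Fc) (s : unitInterval), K (γ, s) ∈ Fc) ∧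
      (∀ γ : Fc, K (γ, 0) = γ.1) ∧
      (∀ (γ : Fc) (t : unitInterval), K (γ, 1) t = e) ∧
      (∀ (g₁ g₂ : G) (γ γ' : Fc),
        (∀ t : unitInterval,
          γ'.1 t = if (t : ℝ) ≤ 1 / 2 then g₁ • γ.1 t else g₂ • γ.1 t) →
        ∀ (s t : unitInterval),
          K (γ', s) t = if (t : ℝ) ≤ 1 / 2 then g₁ • K (γ, s) t else g₂ • K (γ, s) t)) :=
  invariant_parametrized_fibre_GxG_contractible_general G p e Hd hHdc hHdF hHd0 hHd1 hHde hHdeq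
end
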